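/- Let β ∈ [0,2] and let f, f₀ : [0,1] → [1,2] be measurable. If u(x; β, f) = u(x; 1, f₀) for almost every x ∈ [0,1], then β = 1 and f(x) = f₀(x) for almost every x ∈ [0,1]. (Identifiability of the parameter and of the unknown mechanism in the SemiPDE model of Example 3, a consequence of the stability condition.) -/

import Mathlib

open MeasureTheory Set

/-- The solution component `v(x; β, f) = ∫_0^x e^{β(x−s)} e^s f(s) ds`. -/
noncomputable def v (β : ℝ) (f : ℝ → ℝ) (x : ℝ) : ℝ :=
  ∫ s in (0:ℝ)..x, Real.exp (β * (x - s)) * Real.exp s * f s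

/-- The solution `u(x; β, f) = (v(x; β, f), v(x; 2β, f))` of the SemiPDE model of Example 3. -/
noncomputable def u (β : ℝ) (f : ℝ → ℝ) (x : ℝ) : ℝ × ℝ :=
  (v β f x, v (2 * β) f x)

/-!
Both sides are continuous, so they agree on all of `[0,1]`. By the Lebesgue differentiation
theorem `v(·; β, f)` solves `∂ₓv = βv + eˣf` almost everywhere, and comparing the derivatives of
the two components gives, for a.e. `x`,
`eˣ (f − f₀)(x) = (1 − β) v(x; 1, f₀) = (2 − 2β) v(x; 2, f₀)`.
Since `0 < v(x; 1, f₀) ≤ v(x; 2, f₀)` for `x > 0`, the second equality forces `β = 1`, and then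
the first one reads `f = f₀` a.e.
-/

open Real Filter Topology intervalIntegral

lemma intervalIntegrable_of_forall_mem_Icc {f : ℝ → ℝ} {a b c d : ℝ} (hf : Measurable f)
    (hab : a ≤ b) (hfr : ∀ s ∈ Icc a b, f s ∈ Icc c d) : IntervalIntegrable f volume a b := by
  refine (intervalIntegrable_iff_integrableOn_Icc_of_le hab).2 <|
    Measure.integrableOn_of_bounded (M := max |c| |d|) measure_Icc_lt_top.ne
      hf.aestronglyMeasurable ((ae_restrict_iff' measurableSet_Icc).2 (ae_of_all _ ?_))
  intro s hs
  exact abs_le_max_abs_abs (hfr s hs).1 (hfr s hs).2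

section SolutionComponent

variable {β β₀ b x : ℝ} {f f₀ : ℝ → ℝ}

lemma v_eq_exp_mul_integral (β : ℝ) (f : ℝ → ℝ) (x : ℝ) :
    v β f x = exp (β * x) * ∫ s in (0:ℝ)..x, exp (-β * s) * (exp s * f s) := by
  rw [v, ← intervalIntegral.integral_const_mul]
  refine integral_congr fun s _ => ?_
  rw [mul_sub, exp_sub, neg_mul, exp_neg]
  field_simp

lemma intervalIntegrable_exp_neg_mul_exp_mul (hf : IntervalIntegrable f volume 0 b) (β : ℝ) :
    IntervalIntegrable (fun s => exp (-β * s) * (exp s * f s)) volume 0 b := by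
  simpa only [mul_assoc] using hf.continuousOn_mul (g := fun s => exp (-β * s) * exp s)
    (by fun_prop)

lemma continuousOn_v (hf : IntervalIntegrable f volume 0 b) (β : ℝ) :
    ContinuousOn (v β f) (uIcc 0 b) := by
  simp_rw [funext (v_eq_exp_mul_integral β f)]
  exact (continuous_exp.comp (continuous_const_mul β)).continuousOn.mul
    (continuousOn_primitive_interval' (intervalIntegrable_exp_neg_mul_exp_mul hf β)
      left_mem_uIcc)

lemma continuousOn_u (hf : IntervalIntegrable f volume 0 b) (β : ℝ) :
    ContinuousOn (u β f) (uIcc 0 b) :=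
  (continuousOn_v hf β).prodMk (continuousOn_v hf (2 * β))

lemma ae_hasDerivAt_v (hf : IntervalIntegrable f volume 0 b) (β : ℝ) :
    ∀ᵐ x, x ∈ uIcc 0 b → HasDerivAt (v β f) (β * v β f x + exp x * f x) x := by
  filter_upwards [(intervalIntegrable_exp_neg_mul_exp_mul hf β).ae_hasDerivAt_integral]
    with x hx hxb
  have h := ((hasDerivAt_id x).const_mul β).exp.mul (hx hxb 0 left_mem_uIcc)
  rw [funext (v_eq_exp_mul_integral β f)]
  refine h.congr_deriv ?_
  have hexp : exp (β * x) * exp (-β * x) = 1 := by rw [← exp_add]; simp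
  simp only [id, mul_one]
  linear_combination (exp x * f x) * hexp

/-- Solutions that agree on an interval have the same derivative a.e. there. -/
lemma ae_exp_mul_sub_eq_of_eqOn (hf : IntervalIntegrable f volume 0 b)
    (hf₀ : IntervalIntegrable f₀ volume 0 b) (h : EqOn (v β f) (v β₀ f₀) (Icc 0 b)) :
    ∀ᵐ x ∂volume.restrict (Icc 0 b), exp x * (f x - f₀ x) = (β₀ - β) * v β₀ f₀ x := by
  have hIoo : ∀ᵐ x ∂volume.restrict (Icc 0 b), x ∈ Ioo 0 b := by
    rw [← Measure.restrict_congr_set Ioo_ae_eq_Icc]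
    exact ae_restrict_mem measurableSet_Ioo
  filter_upwards [ae_restrict_of_ae (ae_hasDerivAt_v hf β),
    ae_restrict_of_ae (ae_hasDerivAt_v hf₀ β₀), hIoo] with x hd hd₀ hx
  have hxu : x ∈ uIcc 0 b := Icc_subset_uIcc (Ioo_subset_Icc_self hx)
  have hloc : v β₀ f₀ =ᶠ[𝓝 x] v β f :=
    eventually_of_mem (Ioo_mem_nhds hx.1 hx.2) fun y hy => (h (Ioo_subset_Icc_self hy)).symm
  have hderiv := ((hd hxu).congr_of_eventuallyEq hloc).unique (hd₀ hxu)
  rw [h (Ioo_subset_Icc_self hx)] at hderiv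
  linear_combination hderiv

lemma v_pos (hx : 0 < x) (hf : IntervalIntegrable f volume 0 x)
    (hpos : ∀ s ∈ Ioo 0 x, 0 < f s) : 0 < v β f x :=
  intervalIntegral_pos_of_pos_on (hf.continuousOn_mul (by fun_prop))
    (fun s hs => by have := hpos s hs; positivity) hx

lemma v_mono (hβ : β ≤ β₀) (hx : 0 ≤ x) (hf : IntervalIntegrable f volume 0 x)
    (hnn : ∀ s ∈ Icc 0 x, 0 ≤ f s) : v β f x ≤ v β₀ f x := by
  refine integral_mono_on hx (hf.continuousOn_mul (by fun_prop))
    (hf.continuousOn_mul (by fun_prop)) fun s hs => ?_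
  have := hnn s hs
  have := sub_nonneg.2 hs.2
  gcongr

lemma v_lt_two_mul_v_two_mul (hβ : 0 ≤ β) (hx : 0 < x) (hf : IntervalIntegrable f volume 0 x)
    (hpos : ∀ s ∈ Icc 0 x, 0 < f s) : v β f x < 2 * v (2 * β) f x := by
  have h₁ := v_pos (β := β) hx hf fun s hs => hpos s (Ioo_subset_Icc_self hs)
  have h₂ := v_mono (by linarith : β ≤ 2 * β) hx.le hf fun s hs => (hpos s hs).le
  linarith

end SolutionComponent

theorem identifiability_general (β : ℝ)
    (f f₀ : ℝ → ℝ) (hfm : Measurable f) (hf₀m : Measurable f₀)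
    (hfr : ∀ s ∈ Set.Icc (0:ℝ) 1, f s ∈ Set.Icc (1:ℝ) 2)
    (hf₀r : ∀ s ∈ Set.Icc (0:ℝ) 1, f₀ s ∈ Set.Icc (1:ℝ) 2)
    (heq : ∀ᵐ x ∂(volume.restrict (Set.Icc (0:ℝ) 1)), u β f x = u 1 f₀ x) :
    β = 1 ∧ ∀ᵐ x ∂(volume.restrict (Set.Icc (0:ℝ) 1)), f x = f₀ x := by
  have hf := intervalIntegrable_of_forall_mem_Icc hfm zero_le_one hfr
  have hf₀ := intervalIntegrable_of_forall_mem_Icc hf₀m zero_le_one hf₀r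
  have hu : EqOn (u β f) (u 1 f₀) (Icc 0 1) := by
    have hIcc : uIcc (0:ℝ) 1 = Icc 0 1 := uIcc_of_le zero_le_one
    exact Measure.eqOn_Icc_of_ae_eq volume zero_ne_one heq
      (hIcc ▸ continuousOn_u hf β) (hIcc ▸ continuousOn_u hf₀ 1)
  have h₁ := ae_exp_mul_sub_eq_of_eqOn hf hf₀ fun x hx => congrArg Prod.fst (hu hx)
  have h₂ := ae_exp_mul_sub_eq_of_eqOn hf hf₀ fun x hx => congrArg Prod.snd (hu hx)
  have hβ : β = 1 := by
    have hIoc : ∀ᵐ x ∂volume.restrict (Icc (0:ℝ) 1), x ∈ Ioc 0 1 := by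
      rw [← Measure.restrict_congr_set Ioc_ae_eq_Icc]
      exact ae_restrict_mem measurableSet_Ioc
    have : (ae (volume.restrict (Icc (0:ℝ) 1))).NeBot := ae_neBot.2 (by simp)
    obtain ⟨x, ⟨hx, e₁⟩, e₂⟩ := ((hIoc.and h₁).and h₂).exists
    have hf₀x : IntervalIntegrable f₀ volume 0 x :=
      hf₀.mono_set (uIcc_subset_uIcc left_mem_uIcc (Icc_subset_uIcc (Ioc_subset_Icc_self hx)))
    have hlt : v 1 f₀ x < 2 * v (2 * 1) f₀ x := v_lt_two_mul_v_two_mul zero_le_one hx.1 hf₀x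
      fun s hs => by linarith [(hf₀r s ⟨hs.1, hs.2.trans hx.2⟩).1]
    have hprod : (1 - β) * (v 1 f₀ x - 2 * v (2 * 1) f₀ x) = 0 := by
      linear_combination e₂ - e₁
    linarith [(mul_eq_zero.1 hprod).resolve_right (sub_neg.2 hlt).ne]
  refine ⟨hβ, ?_⟩
  filter_upwards [h₁] with x hx
  rw [hβ, sub_self, zero_mul, mul_eq_zero] at hx
  exact sub_eq_zero.1 (hx.resolve_left (exp_ne_zero x))

/-- Identifiability of the parameter and of the unknown mechanism in the SemiPDE model
of Example 3: if the solutions agree a.e. on [0,1], then β = 1 and f = f₀ a.e. on [0,1]. -/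
theorem identifiability (β : ℝ) (hβ : β ∈ Set.Icc (0:ℝ) 2)
    (f f₀ : ℝ → ℝ) (hfm : Measurable f) (hf₀m : Measurable f₀)
    (hfr : ∀ s ∈ Set.Icc (0:ℝ) 1, f s ∈ Set.Icc (1:ℝ) 2)
    (hf₀r : ∀ s ∈ Set.Icc (0:ℝ) 1, f₀ s ∈ Set.Icc (1:ℝ) 2)
    (heq : ∀ᵐ x ∂(volume.restrict (Set.Icc (0:ℝ) 1)), u β f x = u 1 f₀ x) :
    β = 1 ∧ ∀ᵐ x ∂(volume.restrict (Set.Icc (0:ℝ) 1)), f x = f₀ x :=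
  identifiability_general β f f₀ hfm hf₀m hfr hf₀r heq
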